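/- arXiv:2402.03903 — 2 statements merged into one kernel-verified Lean document; each statement's English description precedes it below -/
import Mathlib

section
/- Let (c_n)_{n≥1} be nonnegative reals with ∑_{n=1}^∞ c_n = 1 and suppose at least two weights are nonzero, and let γ ∈ (0,1). If n := log_γ(∑_{k=1}^∞ c_k γ^k) (so that γ^n = ∑_k c_k γ^k), then the strict inequality ∑_{i=1}^∞ ∑_{j=1}^∞ c_i c_j Γ₂(min(i,j)) < Γ₂(n) holds, where Γ₂(m) := (1 - γ^{2m})/(1 - γ²) for real m ≥ 0. -/
/-- Discounted case of the variance-reduction key inequality: the doubly-weighted average of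
`Γ₂(min(i,j))` is strictly less than `Γ₂(n)` where `n` is the effective n-step. -/
theorem gamma2_min_strict_lt (γ : ℝ) (hγ0 : 0 < γ) (hγ1 : γ < 1)
    (c : ℕ → ℝ) (hc : ∀ k, 0 ≤ c k) (hsum : ∑' k : ℕ, c (k + 1) = 1)
    (htwo : ∃ i j : ℕ, i ≠ j ∧ c (i + 1) ≠ 0 ∧ c (j + 1) ≠ 0)
    (n : ℝ) (hn : n = Real.logb γ (∑' k : ℕ, c (k + 1) * γ ^ (k + 1))) :
    ∑' i : ℕ, ∑' j : ℕ, c (i + 1) * c (j + 1) *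
        ((1 - γ ^ (2 * ((min (i + 1) (j + 1) : ℕ) : ℝ))) / (1 - γ ^ 2)) <
      (1 - γ ^ (2 * n)) / (1 - γ ^ 2) := by
  set a : ℕ → ℝ := fun k => c (k + 1) with ha_def
  have ha : ∀ k, 0 ≤ a k := fun k => hc _
  have hsum' : ∑' k, a k = 1 := hsum
  have hsa : Summable a := by
    by_contra h
    rw [tsum_eq_zero_of_not_summable h] at hsum'
    norm_num at hsum'
  have hq1 : γ ^ 2 < 1 := by nlinarith
  have hq0 : (0:ℝ) < γ ^ 2 := by positivity
  have h1q : (0:ℝ) < 1 - γ ^ 2 := by linarith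
  -- generic summability helper
  have hsummul : ∀ (x : ℕ → ℝ), (∀ j, 0 ≤ x j) → (∀ j, x j ≤ 1) →
      Summable (fun j => a j * x j) := fun x hx0 hx1 =>
    Summable.of_nonneg_of_le (fun j => mul_nonneg (ha j) (hx0 j))
      (fun j => mul_le_of_le_one_right (ha j) (hx1 j)) hsa
  have hγpow1 : ∀ m : ℕ, γ ^ m ≤ 1 := fun m => pow_le_one₀ hγ0.le hγ1.le
  have hqpow1 : ∀ m : ℕ, (γ ^ 2) ^ m ≤ 1 := fun m => pow_le_one₀ hq0.le hq1.le
  have hsT : Summable (fun k => a k * γ ^ (k + 1)) :=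
    hsummul _ (fun k => by positivity) (fun k => hγpow1 _)
  set T : ℝ := ∑' k, a k * γ ^ (k + 1) with hT_def
  obtain ⟨i₀, j₀, hij, hi₀, hj₀⟩ := htwo
  have hi₀' : 0 < a i₀ := lt_of_le_of_ne (ha i₀) (Ne.symm hi₀)
  have hj₀' : 0 < a j₀ := lt_of_le_of_ne (ha j₀) (Ne.symm hj₀)
  have hT0 : 0 < T :=
    Summable.tsum_pos hsT (fun k => mul_nonneg (ha k) (by positivity)) i₀
      (mul_pos hi₀' (by positivity))
  have hγn : γ ^ n = T := by
    rw [hn]; exact Real.rpow_logb hγ0 (ne_of_lt hγ1) hT0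
  have hexp : ∀ m : ℕ, γ ^ ((2:ℝ) * (m:ℝ)) = (γ ^ 2) ^ m := by
    intro m
    rw [show (2:ℝ) * (m:ℝ) = ((2*m : ℕ):ℝ) by push_cast; ring,
      Real.rpow_natCast, pow_mul]
  have h2n : γ ^ (2 * n) = T ^ 2 := by
    rw [show (2:ℝ) * n = n * 2 by ring, Real.rpow_mul hγ0.le,
      show ((2:ℝ)) = ((2:ℕ):ℝ) by norm_num, Real.rpow_natCast, hγn]
  -- inner sums
  set m : ℕ → ℕ → ℕ := fun i j => min (i + 1) (j + 1) with hm_def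
  set S : ℕ → ℝ := fun i => ∑' j, a j * (γ ^ 2) ^ (m i j) with hS_def
  have hSsum : ∀ i, Summable (fun j => a j * (γ ^ 2) ^ (m i j)) :=
    fun i => hsummul _ (fun j => pow_nonneg hq0.le _) (fun j => hqpow1 _)
  have hS0 : ∀ i, 0 ≤ S i := fun i => tsum_nonneg (fun j => mul_nonneg (ha j) (pow_nonneg hq0.le _))
  have hS1 : ∀ i, S i ≤ 1 := by
    intro i
    calc S i ≤ ∑' j, a j := Summable.tsum_le_tsum
          (fun j => mul_le_of_le_one_right (ha j) (hqpow1 _)) (hSsum i) hsa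
      _ = 1 := hsum'
  -- rewrite inner tsum of the LHS
  have hinner : ∀ i, (∑' j : ℕ, c (i + 1) * c (j + 1) *
        ((1 - γ ^ ((2:ℝ) * ((min (i + 1) (j + 1) : ℕ) : ℝ))) / (1 - γ ^ 2)))
      = (a i / (1 - γ ^ 2)) * (1 - S i) := by
    intro i
    have : ∀ j : ℕ, c (i + 1) * c (j + 1) *
        ((1 - γ ^ ((2:ℝ) * ((min (i + 1) (j + 1) : ℕ) : ℝ))) / (1 - γ ^ 2))
        = (a i / (1 - γ ^ 2)) * (a j - a j * (γ ^ 2) ^ (m i j)) := by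
      intro j
      rw [hexp]
      field_simp
      ring
    rw [tsum_congr this, tsum_mul_left, Summable.tsum_sub hsa (hSsum i), hsum']
  rw [tsum_congr hinner, h2n]
  -- outer rewrite
  have hUs : Summable (fun i => a i * S i) := hsummul _ (fun i => hS0 i) hS1
  set U : ℝ := ∑' i, a i * S i with hU_def
  have houter : (∑' i, (a i / (1 - γ ^ 2)) * (1 - S i)) = (1 - U) / (1 - γ ^ 2) := by
    have : ∀ i, (a i / (1 - γ ^ 2)) * (1 - S i)
        = (1 / (1 - γ ^ 2)) * (a i - a i * S i) := by
      intro i; field_simp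
    rw [tsum_congr this, tsum_mul_left, Summable.tsum_sub hsa hUs, hsum']
    field_simp
    rfl
  rw [houter]
  -- key: T ^ 2 < U
  have hkey : T ^ 2 < U := by
    have hT2 : T ^ 2 = ∑' i, (a i * γ ^ (i + 1)) * T := by
      rw [tsum_mul_right]; ring
    have hsT2 : Summable (fun i => (a i * γ ^ (i + 1)) * T) := hsT.mul_right T
    have hptnonneg : ∀ i j : ℕ,
        0 ≤ a j * (γ ^ 2) ^ (m i j) - a j * γ ^ (j + 1) * γ ^ (i + 1) := by
      intro i j
      have h2m : γ ^ ((i + 1) + (j + 1)) ≤ γ ^ (2 * m i j) :=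
        pow_le_pow_of_le_one hγ0.le hγ1.le (by simp only [hm_def]; omega)
      rw [sub_nonneg,
        show a j * γ ^ (j + 1) * γ ^ (i + 1) = a j * γ ^ ((i + 1) + (j + 1)) by
          rw [pow_add]; ring,
        show (γ ^ 2) ^ (m i j) = γ ^ (2 * m i j) by rw [← pow_mul]]
      exact mul_le_mul_of_nonneg_left h2m (ha j)
    have hSdiff : ∀ i, S i - γ ^ (i + 1) * T
        = ∑' j, (a j * (γ ^ 2) ^ (m i j) - a j * γ ^ (j + 1) * γ ^ (i + 1)) := by
      intro i
      rw [Summable.tsum_sub (hSsum i) ((hsT.mul_right (γ ^ (i+1))).congr (fun j => by ring))]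
      congr 1
      rw [hT_def, ← tsum_mul_left]
      exact tsum_congr (fun j => by ring)
    have hSdnonneg : ∀ i, 0 ≤ S i - γ ^ (i + 1) * T := by
      intro i
      rw [hSdiff i]
      exact tsum_nonneg (fun j => hptnonneg i j)
    have hterm : ∀ i, a i * S i - (a i * γ ^ (i + 1)) * T
        = a i * (S i - γ ^ (i + 1) * T) := fun i => by ring
    have hdiffpos : 0 < U - T ^ 2 := by
      rw [hT2, hU_def, ← Summable.tsum_sub hUs hsT2, tsum_congr hterm]
      apply Summable.tsum_pos
      · exact ((hUs.sub hsT2).congr (fun i => hterm i))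
      · intro i; exact mul_nonneg (ha i) (hSdnonneg i)
      · show 0 < a i₀ * (S i₀ - γ ^ (i₀ + 1) * T)
        apply mul_pos hi₀'
        rw [hSdiff i₀]
        apply Summable.tsum_pos (((hSsum i₀).sub
          ((hsT.mul_right (γ ^ (i₀+1))).congr (fun j => by ring)))) (hptnonneg i₀) j₀
        have hlt : 2 * m i₀ j₀ < (i₀ + 1) + (j₀ + 1) := by
          simp only [hm_def]; omega
        have : γ ^ ((i₀ + 1) + (j₀ + 1)) < γ ^ (2 * m i₀ j₀) :=
          pow_lt_pow_right_of_lt_one₀ hγ0 hγ1 hlt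
        have heq : a j₀ * γ ^ (j₀ + 1) * γ ^ (i₀ + 1) = a j₀ * γ ^ ((i₀+1)+(j₀+1)) := by
          rw [pow_add]; ring
        have heq2 : a j₀ * (γ ^ 2) ^ (m i₀ j₀) = a j₀ * γ ^ (2 * m i₀ j₀) := by
          rw [← pow_mul]
        rw [heq, heq2]
        nlinarith
    linarith
  have : (1 - U) / (1 - γ ^ 2) < (1 - T ^ 2) / (1 - γ ^ 2) :=
    div_lt_div_of_pos_right (by linarith) h1q
  linarith
end

section
/- Let (c_n)_{n≥1} be nonnegative reals with ∑_{n=1}^∞ c_n = 1, at least two weights nonzero, and suppose ∑_{n=1}^∞ c_n n converges to some value n. Then ∑_{i=1}^∞ ∑_{j=1}^∞ c_i c_j min(i,j) < n. -/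
/-!
Pointwise `min u v ≤ (u + v) / 2`, strictly when `u ≠ v`, and the double average of
`(x i + x j) / 2` is the mean `m` because the weights sum to `1`. Summing over `ι × ι`, where
everything converges absolutely, the strict inequality at one pair of positive weights carrying
distinct values survives.
-/

theorem HasSum.prod_mul_real {ι κ : Type*} {f : ι → ℝ} {g : κ → ℝ} {s t : ℝ}
    (hf : HasSum f s) (hg : HasSum g t) :
    HasSum (fun p : ι × κ => f p.1 * g p.2) (s * t) :=
  hf.mul hg (summable_mul_of_summable_norm hf.summable.norm hg.summable.norm)

section Midpoint

variable {K : Type*} [Field K] [LinearOrder K] [IsStrictOrderedRing K]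

theorem min_le_add_div_two (u v : K) : min u v ≤ (u + v) / 2 := by
  linarith [min_add_max u v, min_le_max (a := u) (b := v)]

theorem min_lt_add_div_two {u v : K} (h : u ≠ v) : min u v < (u + v) / 2 := by
  linarith [min_add_max u v, min_lt_max.mpr h]

end Midpoint

section WeightedMin

variable {ι : Type*} {a x : ι → ℝ} {m : ℝ}

theorem hasSum_mul_mul_add_div_two (ha : HasSum a 1) (hax : HasSum (fun i => a i * x i) m) :
    HasSum (fun p : ι × ι => a p.1 * a p.2 * ((x p.1 + x p.2) / 2)) m := by
  have h := ((hax.prod_mul_real ha).add (ha.prod_mul_real hax)).div_const 2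
  rw [mul_one, one_mul, add_self_div_two] at h
  refine (congrArg (HasSum · m) (funext fun p => ?_)).mpr h
  ring

theorem summable_mul_mul_min (ha₀ : 0 ≤ a) (ha : Summable a)
    (hax : Summable fun i => a i * x i) :
    Summable fun p : ι × ι => a p.1 * a p.2 * min (x p.1) (x p.2) := by
  refine .of_norm_bounded ((summable_mul_of_summable_norm hax.norm.norm ha.norm).add
    (summable_mul_of_summable_norm ha.norm hax.norm.norm)) fun p => ?_
  have hmin : |min (x p.1) (x p.2)| ≤ |x p.1| + |x p.2| :=
    abs_min_le_max_abs_abs.trans (max_le_add_of_nonneg (abs_nonneg _) (abs_nonneg _))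
  have ha₁ := ha₀ p.1
  have ha₂ := ha₀ p.2
  simp only [Real.norm_eq_abs, abs_mul, abs_of_nonneg ha₁, abs_of_nonneg ha₂]
  nlinarith [mul_le_mul_of_nonneg_left hmin (mul_nonneg ha₁ ha₂)]

theorem tsum_tsum_mul_mul_min_lt (ha₀ : 0 ≤ a) (ha : HasSum a 1)
    (hax : HasSum (fun i => a i * x i) m)
    (hspread : ∃ i j, x i ≠ x j ∧ a i ≠ 0 ∧ a j ≠ 0) :
    ∑' i, ∑' j, a i * a j * min (x i) (x j) < m := by
  obtain ⟨i, j, hx, hi, hj⟩ := hspread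
  have hmid := hasSum_mul_mul_add_div_two ha hax
  have hmin := summable_mul_mul_min ha₀ ha.summable hax.summable
  rw [← hmin.tsum_prod, ← hmid.tsum_eq]
  refine hmin.tsum_lt_tsum (i := (i, j)) (fun p => ?_) ?_ hmid.summable
  · exact mul_le_mul_of_nonneg_left (min_le_add_div_two _ _) (mul_nonneg (ha₀ _) (ha₀ _))
  · exact mul_lt_mul_of_pos_left (min_lt_add_div_two hx)
      (mul_pos ((ha₀ i).lt_of_ne' hi) ((ha₀ j).lt_of_ne' hj))

end WeightedMin

/-- Undiscounted case: the doubly-weighted average of `min(i,j)` under a non-degenerate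
probability distribution on the positive integers is strictly less than its mean `n`. -/
theorem min_double_average_lt_mean (c : ℕ → ℝ) (hc : ∀ k, 0 ≤ c k)
    (hsum : ∑' k : ℕ, c (k + 1) = 1)
    (htwo : ∃ i j : ℕ, i ≠ j ∧ c (i + 1) ≠ 0 ∧ c (j + 1) ≠ 0)
    (n : ℝ) (hmean : Summable fun k : ℕ => c (k + 1) * ((k : ℝ) + 1))
    (hn : ∑' k : ℕ, c (k + 1) * ((k : ℝ) + 1) = n) :
    ∑' i : ℕ, ∑' j : ℕ, c (i + 1) * c (j + 1) * ((min (i + 1) (j + 1) : ℕ) : ℝ) < n := by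
  have hsummable : Summable fun k => c (k + 1) := by
    by_contra h
    simp [tsum_eq_zero_of_not_summable h] at hsum
  obtain ⟨i, j, hij, hi, hj⟩ := htwo
  push_cast
  refine tsum_tsum_mul_mul_min_lt (x := fun k : ℕ => (k : ℝ) + 1) (fun k => hc (k + 1))
    (hsum ▸ hsummable.hasSum) (hn ▸ hmean.hasSum) ⟨i, j, ?_, hi, hj⟩
  simpa using hij
end
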